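/- Let $C\ge 1$ and let $y:[0,T^*)\to[0,\infty)$ be continuous with $y(0)\le R$ and satisfy $y(t)\le C e^{C\int_0^t y(\tau)d\tau}\big(R+\int_0^t y(\tau)^2 d\tau\big)$ for all $t$. Then there exists $T=T(C,R)>0$, independent of the particular function $y$, such that $y(t)\le 4CR$ for all $t\in[0,\min(T,T^*))$. -/
import Mathlib


open MeasureTheory Set intervalIntegral Topology Filter

set_option maxHeartbeats 1000000

/-- The bootstrap/continuity argument in Step 1 of the paper: if `C ≥ 1`, `R > 0`,
and a continuous nonnegative `y : [0,T^*) → [0,∞)` satisfies `y(0) ≤ R` and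
`y(t) ≤ C e^{C ∫₀ᵗ y} (R + ∫₀ᵗ y²)`, then there is a time `T = T(C,R) > 0`,
independent of the particular function `y` and of `T^*`, with `y ≤ 4CR` on
`[0, min(T,T^*))`. -/
theorem bootstrap_uniform_lifespan
    (C R : ℝ) (hC : 1 ≤ C) (hR : 0 < R) :
    ∃ T > (0:ℝ), ∀ Tstar : ℝ, 0 < Tstar → ∀ y : ℝ → ℝ,
      ContinuousOn y (Set.Ico 0 Tstar) →
      (∀ t ∈ Set.Ico (0:ℝ) Tstar, 0 ≤ y t) →
      y 0 ≤ R →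
      (∀ t ∈ Set.Ico (0:ℝ) Tstar,
        y t ≤ C * Real.exp (C * ∫ τ in (0:ℝ)..t, y τ)
          * (R + ∫ τ in (0:ℝ)..t, (y τ) ^ 2)) →
      ∀ t ∈ Set.Ico (0:ℝ) (min T Tstar), y t ≤ 4 * C * R := by
  have hC0 : (0:ℝ) < C := lt_of_lt_of_le one_pos hC
  refine ⟨1 / (32 * C ^ 2 * R), by positivity, ?_⟩
  intro Tstar hTs y hcont hnn h0 hineq t ht
  obtain ⟨ht0, htlt⟩ := ht
  have htT : t < 1 / (32 * C ^ 2 * R) := lt_of_lt_of_le htlt (min_le_left _ _)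
  have htTs : t < Tstar := lt_of_lt_of_le htlt (min_le_right _ _)
  by_contra hcon
  push_neg at hcon
  -- the bad set
  set B : Set ℝ := {s | s ∈ Icc 0 t ∧ 4 * C * R ≤ y s} with hB
  have htB : t ∈ B := ⟨⟨ht0, le_refl t⟩, hcon.le⟩
  have hIccSub : Icc 0 t ⊆ Ico 0 Tstar := fun s hs => ⟨hs.1, lt_of_le_of_lt hs.2 htTs⟩
  have hcont' : ContinuousOn y (Icc 0 t) := hcont.mono hIccSub
  have hBclosed : IsClosed B := by
    have h1 := hcont'.preimage_isClosed_of_isClosed isClosed_Icc (isClosed_Ici (a := 4 * C * R))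
    have : B = Icc 0 t ∩ y ⁻¹' Ici (4 * C * R) := by
      ext s
      simp only [hB, Set.mem_setOf_eq, Set.mem_inter_iff, Set.mem_preimage, Set.mem_Ici]
    rw [this]; exact h1
  have hBbdd : BddBelow B := ⟨0, fun s hs => hs.1.1⟩
  set σ := sInf B with hσ
  have hσB : σ ∈ B := hBclosed.csInf_mem ⟨t, htB⟩ hBbdd
  have hσ0 : 0 ≤ σ := hσB.1.1
  have hσt : σ ≤ t := hσB.1.2
  have hyσ : 4 * C * R ≤ y σ := hσB.2
  -- below σ, y < 4CR
  have hlt : ∀ s ∈ Ico (0:ℝ) σ, y s < 4 * C * R := by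
    intro s hs
    by_contra h
    push_neg at h
    exact absurd (csInf_le hBbdd ⟨⟨hs.1, le_trans hs.2.le hσt⟩, h⟩) (not_le.mpr hs.2)
  -- y ≤ 4CR on Icc 0 σ
  have hle : ∀ s ∈ Icc (0:ℝ) σ, y s ≤ 4 * C * R := by
    intro s hs
    rcases lt_or_eq_of_le hs.2 with h | h
    · exact (hlt s ⟨hs.1, h⟩).le
    · subst h
      rcases eq_or_lt_of_le hσ0 with h0 | h0
      · rw [← h0]
        nlinarith
      · have hne : (𝓝[Ico (0:ℝ) σ] σ).NeBot := by
          rw [← mem_closure_iff_nhdsWithin_neBot, closure_Ico (ne_of_lt h0)]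
          exact ⟨hσ0, le_refl σ⟩
        have htend : Filter.Tendsto y (nhdsWithin σ (Ico 0 σ)) (nhds (y σ)) := by
          have hmem : σ ∈ Ico 0 Tstar := hIccSub ⟨hσ0, hσt⟩
          exact (hcont σ hmem).mono_left
            (nhdsWithin_mono σ (fun x hx => ⟨hx.1, lt_of_lt_of_le hx.2 (le_trans hσt htTs.le)⟩))
        refine le_of_tendsto htend ?_
        exact eventually_nhdsWithin_of_forall (fun x hx => (hlt x hx).le)
  -- integrability
  have hsubσ : Icc 0 σ ⊆ Ico 0 Tstar := fun s hs =>
    ⟨hs.1, lt_of_le_of_lt (le_trans hs.2 hσt) htTs⟩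
  have hcσ : ContinuousOn y (Icc 0 σ) := hcont.mono hsubσ
  have hInt : IntervalIntegrable y volume 0 σ := by
    apply ContinuousOn.intervalIntegrable
    rwa [uIcc_of_le hσ0]
  have hInt2 : IntervalIntegrable (fun τ => y τ ^ 2) volume 0 σ := by
    apply ContinuousOn.intervalIntegrable
    rw [uIcc_of_le hσ0]
    exact hcσ.pow 2
  -- bound the integrals
  have hI : (∫ τ in (0:ℝ)..σ, y τ) ≤ 4 * C * R * σ := by
    calc (∫ τ in (0:ℝ)..σ, y τ) ≤ ∫ _ in (0:ℝ)..σ, 4 * C * R :=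
          intervalIntegral.integral_mono_on hσ0 hInt (intervalIntegrable_const) hle
      _ = 4 * C * R * σ := by simp [intervalIntegral.integral_const, smul_eq_mul]; ring
  have hJ : (∫ τ in (0:ℝ)..σ, y τ ^ 2) ≤ (4 * C * R) ^ 2 * σ := by
    calc (∫ τ in (0:ℝ)..σ, y τ ^ 2) ≤ ∫ _ in (0:ℝ)..σ, (4 * C * R) ^ 2 := by
          apply intervalIntegral.integral_mono_on hσ0 hInt2 (intervalIntegrable_const)
          intro s hs
          have h1 := hle s hs
          have h2 := hnn s (hsubσ hs)
          nlinarith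
      _ = (4 * C * R) ^ 2 * σ := by simp [intervalIntegral.integral_const, smul_eq_mul]; ring
  have hJ0 : 0 ≤ (∫ τ in (0:ℝ)..σ, y τ ^ 2) :=
    intervalIntegral.integral_nonneg hσ0 (fun s hs => sq_nonneg _)
  -- key numeric bounds
  have hσT : σ < 1 / (32 * C ^ 2 * R) := lt_of_le_of_lt hσt htT
  have hexp_arg : C * (∫ τ in (0:ℝ)..σ, y τ) ≤ 1 / 8 := by
    have h1 : C * (∫ τ in (0:ℝ)..σ, y τ) ≤ C * (4 * C * R * σ) := by nlinarith
    have h2 : 4 * C ^ 2 * R * σ ≤ 4 * C ^ 2 * R * (1 / (32 * C ^ 2 * R)) := by nlinarith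
    have h3 : 4 * C ^ 2 * R * (1 / (32 * C ^ 2 * R)) = 1 / 8 := by
      field_simp; ring
    nlinarith
  have hexp : Real.exp (C * (∫ τ in (0:ℝ)..σ, y τ)) ≤ 2 := by
    have h1 : Real.exp (C * (∫ τ in (0:ℝ)..σ, y τ)) ≤ Real.exp (1/8) :=
      Real.exp_le_exp.mpr hexp_arg
    have h2 : Real.exp (1/8 : ℝ) < 2 := by
      have h8 : (Real.exp (1/8 : ℝ)) ^ (8:ℕ) = Real.exp 1 := by
        rw [← Real.exp_nat_mul]; norm_num
      have he : Real.exp 1 < 2.7182818286 := Real.exp_one_lt_d9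
      have h28 : (2:ℝ) ^ (8:ℕ) = 256 := by norm_num
      have : (Real.exp (1/8 : ℝ)) ^ (8:ℕ) < (2:ℝ) ^ (8:ℕ) := by
        rw [h8, h28]; linarith
      exact lt_of_pow_lt_pow_left₀ 8 (by norm_num) this
    linarith
  have hJle : (∫ τ in (0:ℝ)..σ, y τ ^ 2) ≤ R / 2 := by
    have h2 : (4 * C * R) ^ 2 * σ ≤ (4 * C * R) ^ 2 * (1 / (32 * C ^ 2 * R)) := by nlinarith
    have h3 : (4 * C * R) ^ 2 * (1 / (32 * C ^ 2 * R)) = R / 2 := by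
      field_simp; ring
    nlinarith
  -- apply the hypothesis at σ
  have hmemσ : σ ∈ Ico (0:ℝ) Tstar := hsubσ ⟨hσ0, le_refl σ⟩
  have hkey := hineq σ hmemσ
  have hE0 : (0:ℝ) < Real.exp (C * (∫ τ in (0:ℝ)..σ, y τ)) := Real.exp_pos _
  have hfinal : C * Real.exp (C * ∫ τ in (0:ℝ)..σ, y τ)
      * (R + ∫ τ in (0:ℝ)..σ, (y τ) ^ 2) ≤ C * 2 * (R + R / 2) := by
    gcongr
  nlinarith [hkey, hfinal, hyσ]
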